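/- arXiv:2207.02237 — 3 statements merged into one kernel-verified Lean document; each statement's English description precedes it below -/
import Mathlib

section
/- For a three-level system in the infinite-temperature limit, let p = (p_1, p_2, p_3) be a probability vector with p_1^↓ ≥ p_2^↓ ≥ p_3^↓ its non-increasingly sorted entries; then the Euclidean relative volume of the future majorisation cone of p, i.e. the ratio of the area of conv{σ·p : σ ∈ S_3} to the area of Δ_3, is V_+^0(p) = (3p_1^↓ − 1)^2 − 3(p_2^↓ − p_1^↓)^2. -/
open MeasureTheory

/-- `p` is a probability vector. -/
def IsProbVec {d : ℕ} (p : Fin d → ℝ) : Prop :=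
  (∀ i, 0 ≤ p i) ∧ ∑ i, p i = 1

open Set Pointwise

def Tri : Set (ℝ × ℝ) := {x : ℝ × ℝ | 0 ≤ x.1 ∧ 0 ≤ x.2 ∧ x.1 + x.2 ≤ 1}

lemma line_null (r : ℝ) : volume {q : ℝ × ℝ | q.1 + q.2 = r} = 0 := by
  have hm : MeasurableSet {q : ℝ × ℝ | q.1 + q.2 = r} :=
    (measurable_fst.add measurable_snd) (measurableSet_singleton r)
  rw [Measure.volume_eq_prod, Measure.prod_apply hm]
  have : ∀ x : ℝ, (Prod.mk x ⁻¹' {q : ℝ × ℝ | q.1 + q.2 = r}) = {r - x} := by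
    intro x; ext y
    simp only [mem_preimage, mem_setOf_eq, mem_singleton_iff]
    constructor <;> intro h <;> linarith
  simp only [this]
  simp

lemma horiz_null (r : ℝ) : volume {q : ℝ × ℝ | q.2 = r} = 0 := by
  have : {q : ℝ × ℝ | q.2 = r} = (univ : Set ℝ) ×ˢ ({r} : Set ℝ) := by
    ext q; simp [Set.mem_prod, Prod.ext_iff, eq_comm]
  rw [this, Measure.volume_eq_prod, Measure.prod_prod]
  simp

lemma vol_Tri : volume Tri = ENNReal.ofReal (1/2) := by
  have hint : IntegrableOn (fun x : ℝ => 1 - x) (Icc 0 1) volume :=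
    (continuous_const.sub continuous_id).integrableOn_Icc
  have hint0 : IntegrableOn (fun _ : ℝ => (0:ℝ)) (Icc 0 1) volume := integrableOn_const (by simp) (by simp)
  have hreg : volume (regionBetween (fun _ : ℝ => (0:ℝ)) (fun x => 1 - x) (Icc 0 1))
      = ENNReal.ofReal (1/2) := by
    rw [Measure.volume_eq_prod]
    rw [volume_regionBetween_eq_integral hint0 hint measurableSet_Icc
      (fun x hx => by simp only [mem_Icc] at hx; linarith [hx.2])]
    simp only [Pi.sub_apply, sub_zero]
    rw [integral_Icc_eq_integral_Ioc, ← intervalIntegral.integral_of_le (by norm_num : (0:ℝ) ≤ 1),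
      intervalIntegral.integral_sub intervalIntegrable_const intervalIntegral.intervalIntegrable_id,
      integral_id]
    norm_num
  have hsub : regionBetween (fun _ : ℝ => (0:ℝ)) (fun x => 1 - x) (Icc 0 1) ⊆ Tri := by
    rintro ⟨x, y⟩ ⟨hx, hy⟩
    simp only [mem_Icc] at hx
    simp only [mem_Ioo] at hy
    exact ⟨hx.1, le_of_lt hy.1, by linarith [hy.2]⟩
  have hsup : Tri ⊆ regionBetween (fun _ : ℝ => (0:ℝ)) (fun x => 1 - x) (Icc 0 1)
      ∪ {q : ℝ × ℝ | q.2 = 0} ∪ {q : ℝ × ℝ | q.1 + q.2 = 1} := by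
    rintro ⟨x, y⟩ ⟨h1, h2, h3⟩
    rcases eq_or_lt_of_le h2 with h | h
    · exact Or.inl (Or.inr h.symm)
    rcases eq_or_lt_of_le h3 with h' | h'
    · exact Or.inr h'
    exact Or.inl (Or.inl ⟨⟨h1, by linarith⟩, h, by dsimp; linarith⟩)
  refine le_antisymm ?_ ?_
  · calc volume Tri ≤ _ := measure_mono hsup
    _ ≤ volume (regionBetween (fun _ : ℝ => (0:ℝ)) (fun x => 1 - x) (Icc 0 1))
        + volume {q : ℝ × ℝ | q.2 = 0} + volume {q : ℝ × ℝ | q.1 + q.2 = 1} := by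
        exact le_trans (measure_union_le _ _) (by gcongr; exact measure_union_le _ _)
    _ = ENNReal.ofReal (1/2) := by rw [hreg, horiz_null, line_null]; simp
  · rw [← hreg]; exact measure_mono hsub

lemma vol_affine_Tri (r : ℝ) (v : ℝ × ℝ) :
    volume ((fun q : ℝ × ℝ => v + r • q) '' Tri) = ENNReal.ofReal (r ^ 2 * (1/2)) := by
  have h1 : ((fun q : ℝ × ℝ => v + r • q) '' Tri) = v +ᵥ (r • Tri) := by
    ext q
    simp only [Set.mem_image, Set.mem_vadd_set, Set.mem_smul_set, vadd_eq_add]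
    constructor
    · rintro ⟨x, hx, rfl⟩; exact ⟨r • x, ⟨x, hx, rfl⟩, rfl⟩
    · rintro ⟨y, ⟨x, hx, rfl⟩, rfl⟩; exact ⟨x, hx, rfl⟩
  rw [h1, measure_vadd, Measure.addHaar_smul]
  have h2 : Module.finrank ℝ (ℝ × ℝ) = 2 := by simp
  rw [h2, vol_Tri, ← ENNReal.ofReal_mul (by positivity)]
  congr 1
  rw [abs_of_nonneg (by positivity)]

/-- the hexagon region -/
def Hex (a c : ℝ) : Set (ℝ × ℝ) :=
  {q : ℝ × ℝ | (c ≤ q.1 ∧ q.1 ≤ a) ∧ (c ≤ q.2 ∧ q.2 ≤ a) ∧ (1-a ≤ q.1+q.2 ∧ q.1+q.2 ≤ 1-c)}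

lemma measurable_Hex (a c : ℝ) : MeasurableSet (Hex a c) := by
  unfold Hex
  apply MeasurableSet.inter
  · exact (measurableSet_le measurable_const measurable_fst).inter
      (measurableSet_le measurable_fst measurable_const)
  apply MeasurableSet.inter
  · exact (measurableSet_le measurable_const measurable_snd).inter
      (measurableSet_le measurable_snd measurable_const)
  · exact (measurableSet_le measurable_const (measurable_fst.add measurable_snd)).inter
      (measurableSet_le (measurable_fst.add measurable_snd) measurable_const)

lemma vol_Hex (a b c : ℝ) (hab : b ≤ a) (hbc : c ≤ b) (hsum : a + b + c = 1) :
    (volume (Hex a c)).toReal = (a-c)^2 - (b-c)^2/2 - (a-b)^2/2 := by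
  set f := fun q : ℝ × ℝ => q.1 + q.2 with hf
  have hfm : Measurable f := measurable_fst.add measurable_snd
  set Sq : Set (ℝ × ℝ) := Icc c a ×ˢ Icc c a with hSq
  set T1 : Set (ℝ × ℝ) := Sq ∩ {q | f q < 1 - a} with hT1
  set T2 : Set (ℝ × ℝ) := Sq ∩ {q | 1 - c < f q} with hT2
  have hca : c ≤ a := le_trans hbc hab
  -- volume of square
  have hvSq : volume Sq = ENNReal.ofReal ((a-c)^2) := by
    rw [hSq, Measure.volume_eq_prod, Measure.prod_prod, Real.volume_Icc,
      ← ENNReal.ofReal_mul (by linarith)]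
    congr 1; ring
  -- T1 has the same volume as an affine triangle
  have hvT1 : volume T1 = ENNReal.ofReal ((b-c)^2 * (1/2)) := by
    rw [← vol_affine_Tri (b-c) (c,c)]
    set T1c := (fun q : ℝ × ℝ => (c,c) + (b-c) • q) '' Tri with hT1c
    have hT1c' : T1c = {q : ℝ × ℝ | c ≤ q.1 ∧ c ≤ q.2 ∧ q.1 + q.2 ≤ b + c} := by
      ext ⟨x, y⟩
      simp only [hT1c, Set.mem_image, Tri, mem_setOf_eq, Prod.ext_iff, Prod.smul_mk, Prod.mk_add_mk,
        smul_eq_mul]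
      constructor
      · rintro ⟨⟨u, v⟩, ⟨hu, hv, huv⟩, h1, h2⟩
        dsimp at h1 h2
        constructor
        · nlinarith
        constructor
        · nlinarith
        · nlinarith
      · rintro ⟨h1, h2, h3⟩
        rcases eq_or_lt_of_le hbc with hbc' | hbc'
        · refine ⟨(0, 0), ⟨le_refl _, le_refl _, by norm_num⟩, ?_, ?_⟩ <;> dsimp <;> nlinarith
        · have hne : b - c ≠ 0 := ne_of_gt (by linarith)
          refine ⟨((x - c)/(b-c), (y - c)/(b-c)),
            ⟨div_nonneg (by linarith) (by linarith), div_nonneg (by linarith) (by linarith), ?_⟩,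
            ?_, ?_⟩
          · rw [← add_div, div_le_one (by linarith)]; linarith
          · dsimp; field_simp; ring
          · dsimp; field_simp; ring
    refine le_antisymm (measure_mono ?_) ?_
    · rintro ⟨x, y⟩ ⟨⟨hx, hy⟩, hs⟩
      simp only [mem_Icc] at hx hy
      simp only [mem_setOf_eq] at hs
      rw [hT1c']
      exact ⟨hx.1, hy.1, by dsimp [f] at hs; linarith⟩
    · calc volume T1c ≤ volume (T1 ∪ {q : ℝ × ℝ | q.1 + q.2 = b + c}) := by
            apply measure_mono
            rintro ⟨x, y⟩ hq
            rw [hT1c'] at hq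
            obtain ⟨h1, h2, h3⟩ := hq
            rcases eq_or_lt_of_le h3 with h | h
            · exact Or.inr h
            · refine Or.inl ⟨⟨mem_Icc.2 ⟨h1, by linarith⟩, mem_Icc.2 ⟨h2, by linarith⟩⟩, ?_⟩
              simp only [mem_setOf_eq]; dsimp [f]; linarith
        _ ≤ volume T1 + volume {q : ℝ × ℝ | q.1 + q.2 = b + c} := measure_union_le _ _
        _ = volume T1 := by rw [line_null]; simp
  -- T2 likewise
  have hvT2 : volume T2 = ENNReal.ofReal ((a-b)^2 * (1/2)) := by
    rw [show ((a:ℝ)-b)^2 = (-(a-b))^2 by ring, ← vol_affine_Tri (-(a-b)) (a,a)]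
    set T2c := (fun q : ℝ × ℝ => (a,a) + (-(a-b)) • q) '' Tri with hT2c
    have hT2c' : T2c = {q : ℝ × ℝ | q.1 ≤ a ∧ q.2 ≤ a ∧ a + b ≤ q.1 + q.2} := by
      ext ⟨x, y⟩
      simp only [hT2c, Set.mem_image, Tri, mem_setOf_eq, Prod.ext_iff, Prod.smul_mk, Prod.mk_add_mk,
        smul_eq_mul]
      constructor
      · rintro ⟨⟨u, v⟩, ⟨hu, hv, huv⟩, h1, h2⟩
        dsimp at h1 h2
        refine ⟨by nlinarith, by nlinarith, by nlinarith⟩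
      · rintro ⟨h1, h2, h3⟩
        rcases eq_or_lt_of_le hab with hab' | hab'
        · refine ⟨(0, 0), ⟨le_refl _, le_refl _, by norm_num⟩, ?_, ?_⟩ <;> dsimp <;> nlinarith
        · have hne : a - b ≠ 0 := ne_of_gt (by linarith)
          refine ⟨((a - x)/(a-b), (a - y)/(a-b)),
            ⟨div_nonneg (by linarith) (by linarith), div_nonneg (by linarith) (by linarith), ?_⟩,
            ?_, ?_⟩
          · rw [← add_div, div_le_one (by linarith)]; linarith
          · dsimp; field_simp; ring
          · dsimp; field_simp; ring
    refine le_antisymm (measure_mono ?_) ?_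
    · rintro ⟨x, y⟩ ⟨⟨hx, hy⟩, hs⟩
      simp only [mem_Icc] at hx hy
      simp only [mem_setOf_eq] at hs
      rw [hT2c']
      exact ⟨hx.2, hy.2, by dsimp [f] at hs; linarith⟩
    · calc volume T2c ≤ volume (T2 ∪ {q : ℝ × ℝ | q.1 + q.2 = a + b}) := by
            apply measure_mono
            rintro ⟨x, y⟩ hq
            rw [hT2c'] at hq
            obtain ⟨h1, h2, h3⟩ := hq
            rcases eq_or_lt_of_le h3 with h | h
            · exact Or.inr h.symm
            · refine Or.inl ⟨⟨mem_Icc.2 ⟨by linarith, h1⟩, mem_Icc.2 ⟨by linarith, h2⟩⟩, ?_⟩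
              simp only [mem_setOf_eq]; dsimp [f]; linarith
        _ ≤ volume T2 + volume {q : ℝ × ℝ | q.1 + q.2 = a + b} := measure_union_le _ _
        _ = volume T2 := by rw [line_null]; simp
  -- decomposition of the square
  have hunion : Sq = Hex a c ∪ (T1 ∪ T2) := by
    ext ⟨x, y⟩
    simp only [hSq, hT1, hT2, Hex, Set.mem_union, Set.mem_inter_iff, mem_prod, mem_Icc,
      mem_setOf_eq]
    constructor
    · rintro ⟨hx, hy⟩
      rcases lt_or_ge (x + y) (1 - a) with h | h
      · exact Or.inr (Or.inl ⟨⟨hx, hy⟩, h⟩)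
      rcases lt_or_ge (1 - c) (x + y) with h' | h'
      · exact Or.inr (Or.inr ⟨⟨hx, hy⟩, h'⟩)
      · exact Or.inl ⟨hx, hy, h, h'⟩
    · rintro (⟨hx, hy, _⟩ | ⟨⟨hx, hy⟩, _⟩ | ⟨⟨hx, hy⟩, _⟩) <;> exact ⟨hx, hy⟩
  have hd1 : Disjoint (Hex a c) (T1 ∪ T2) := by
    rw [Set.disjoint_left]
    rintro ⟨x, y⟩ hq hq'
    obtain ⟨_, _, h5, h6⟩ := hq
    rcases hq' with ⟨_, h⟩ | ⟨_, h⟩ <;> simp only [mem_setOf_eq] at h <;> dsimp [f] at h <;> linarith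
  have hd2 : Disjoint T1 T2 := by
    rw [Set.disjoint_left]
    rintro ⟨x, y⟩ ⟨_, h⟩ ⟨_, h'⟩
    simp only [mem_setOf_eq] at h h'
    dsimp [f] at h h'
    linarith
  have hmT1 : MeasurableSet T1 := (measurableSet_Icc.prod measurableSet_Icc).inter
    (measurableSet_lt hfm measurable_const)
  have hmT2 : MeasurableSet T2 := (measurableSet_Icc.prod measurableSet_Icc).inter
    (measurableSet_lt measurable_const hfm)
  have hkey : volume Sq = volume (Hex a c) + (volume T1 + volume T2) := by
    rw [hunion, measure_union hd1 (hmT1.union hmT2), measure_union hd2 hmT2]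
  have hfin : volume (Hex a c) ≠ ⊤ :=
    ne_top_of_le_ne_top (by rw [hvSq]; exact ENNReal.ofReal_ne_top)
      (measure_mono (by rw [hunion]; exact subset_union_left))
  rw [hvT1, hvT2, hvSq] at hkey
  have := congrArg ENNReal.toReal hkey
  rw [ENNReal.toReal_add (by exact hfin) (by simp), ENNReal.toReal_add (by simp) (by simp),
    ENNReal.toReal_ofReal (by positivity), ENNReal.toReal_ofReal (by positivity),
    ENNReal.toReal_ofReal (by positivity)] at this
  linarith

lemma quad_mem {M : Set (ℝ × ℝ)} {P Q R S : ℝ × ℝ} (hP : P ∈ M) (hQ : Q ∈ M) (hR : R ∈ M)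
    (hS : S ∈ M) {t s : ℝ} (ht0 : 0 ≤ t) (ht1 : t ≤ 1) (hs0 : 0 ≤ s) (hs1 : s ≤ 1) :
    t • (s • P + (1-s) • Q) + (1-t) • (s • R + (1-s) • S) ∈ convexHull ℝ M := by
  have hc := convex_convexHull ℝ M
  have h1 : s • P + (1-s) • Q ∈ convexHull ℝ M :=
    hc (subset_convexHull ℝ M hP) (subset_convexHull ℝ M hQ) hs0 (by linarith) (by ring)
  have h2 : s • R + (1-s) • S ∈ convexHull ℝ M :=
    hc (subset_convexHull ℝ M hR) (subset_convexHull ℝ M hS) hs0 (by linarith) (by ring)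
  exact hc h1 h2 ht0 (by linarith) (by ring)

lemma hull_eq_Hex (p : Fin 3 → ℝ) (hp : IsProbVec p) (h12 : p 1 ≤ p 0) (h23 : p 2 ≤ p 1) :
    convexHull ℝ (Set.range fun σ : Equiv.Perm (Fin 3) => ((p (σ 0), p (σ 1)) : ℝ × ℝ))
      = Hex (p 0) (p 2) := by
  set a := p 0
  set b := p 1
  set c := p 2
  have hsum : a + b + c = 1 := by
    have := hp.2; rwa [Fin.sum_univ_three] at this
  have hbnd : ∀ k : Fin 3, c ≤ p k ∧ p k ≤ a := by
    intro k
    fin_cases k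
    · exact ⟨le_trans h23 h12, le_refl _⟩
    · exact ⟨h23, h12⟩
    · exact ⟨le_refl _, le_trans h23 h12⟩
  -- the six vertices belong to the range
  have memA1 : ((a, b) : ℝ × ℝ) ∈ Set.range fun σ : Equiv.Perm (Fin 3) =>
      ((p (σ 0), p (σ 1)) : ℝ × ℝ) := by
    refine ⟨(1 : Equiv.Perm (Fin 3)), ?_⟩
    dsimp only
    rw [show ((1 : Equiv.Perm (Fin 3))) 0 = 0 from by decide,
      show ((1 : Equiv.Perm (Fin 3))) 1 = 1 from by decide]
  have memA2 : ((a, c) : ℝ × ℝ) ∈ Set.range fun σ : Equiv.Perm (Fin 3) =>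
      ((p (σ 0), p (σ 1)) : ℝ × ℝ) := by
    refine ⟨(Equiv.swap 1 2 : Equiv.Perm (Fin 3)), ?_⟩
    dsimp only
    rw [show ((Equiv.swap 1 2 : Equiv.Perm (Fin 3))) 0 = 0 from by decide,
      show ((Equiv.swap 1 2 : Equiv.Perm (Fin 3))) 1 = 2 from by decide]
  have memB1 : ((b, a) : ℝ × ℝ) ∈ Set.range fun σ : Equiv.Perm (Fin 3) =>
      ((p (σ 0), p (σ 1)) : ℝ × ℝ) := by
    refine ⟨(Equiv.swap 0 1 : Equiv.Perm (Fin 3)), ?_⟩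
    dsimp only
    rw [show ((Equiv.swap 0 1 : Equiv.Perm (Fin 3))) 0 = 1 from by decide,
      show ((Equiv.swap 0 1 : Equiv.Perm (Fin 3))) 1 = 0 from by decide]
  have memB2 : ((b, c) : ℝ × ℝ) ∈ Set.range fun σ : Equiv.Perm (Fin 3) =>
      ((p (σ 0), p (σ 1)) : ℝ × ℝ) := by
    refine ⟨(Equiv.swap 0 1 * Equiv.swap 1 2 : Equiv.Perm (Fin 3)), ?_⟩
    dsimp only
    rw [show ((Equiv.swap 0 1 * Equiv.swap 1 2 : Equiv.Perm (Fin 3))) 0 = 1 from by decide,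
      show ((Equiv.swap 0 1 * Equiv.swap 1 2 : Equiv.Perm (Fin 3))) 1 = 2 from by decide]
  have memC1 : ((c, a) : ℝ × ℝ) ∈ Set.range fun σ : Equiv.Perm (Fin 3) =>
      ((p (σ 0), p (σ 1)) : ℝ × ℝ) := by
    refine ⟨(Equiv.swap 0 2 * Equiv.swap 1 2 : Equiv.Perm (Fin 3)), ?_⟩
    dsimp only
    rw [show ((Equiv.swap 0 2 * Equiv.swap 1 2 : Equiv.Perm (Fin 3))) 0 = 2 from by decide,
      show ((Equiv.swap 0 2 * Equiv.swap 1 2 : Equiv.Perm (Fin 3))) 1 = 0 from by decide]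
  have memC2 : ((c, b) : ℝ × ℝ) ∈ Set.range fun σ : Equiv.Perm (Fin 3) =>
      ((p (σ 0), p (σ 1)) : ℝ × ℝ) := by
    refine ⟨(Equiv.swap 0 2 : Equiv.Perm (Fin 3)), ?_⟩
    dsimp only
    rw [show ((Equiv.swap 0 2 : Equiv.Perm (Fin 3))) 0 = 2 from by decide,
      show ((Equiv.swap 0 2 : Equiv.Perm (Fin 3))) 1 = 1 from by decide]
  apply le_antisymm
  · -- hull ⊆ Hex
    apply convexHull_min
    · rintro q ⟨σ, rfl⟩
      have hσsum : p (σ 0) + p (σ 1) + p (σ 2) = 1 := by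
        have h1 := Equiv.sum_comp σ p
        simp only [Fin.sum_univ_three] at h1
        exact h1.trans hsum
      obtain ⟨g0l, g0r⟩ := hbnd (σ 0)
      obtain ⟨g1l, g1r⟩ := hbnd (σ 1)
      obtain ⟨g2l, g2r⟩ := hbnd (σ 2)
      exact ⟨⟨g0l, g0r⟩, ⟨g1l, g1r⟩, by dsimp; linarith, by dsimp; linarith⟩
    · -- Hex is convex
      rintro ⟨x1, y1⟩ hx ⟨x2, y2⟩ hy u v hu hv huv
      obtain ⟨⟨a1, a2⟩, ⟨a3, a4⟩, a5, a6⟩ := hx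
      obtain ⟨⟨b1, b2⟩, ⟨b3, b4⟩, b5, b6⟩ := hy
      dsimp at a1 a2 a3 a4 a5 a6 b1 b2 b3 b4 b5 b6
      refine ⟨⟨?_, ?_⟩, ⟨?_, ?_⟩, ?_, ?_⟩ <;> dsimp <;> nlinarith
  · -- Hex ⊆ hull
    rintro ⟨x, y⟩ ⟨⟨hx1, hx2⟩, ⟨hy1, hy2⟩, hs1, hs2⟩
    dsimp at hx1 hx2 hy1 hy2 hs1 hs2
    rcases le_or_gt b x with hxb | hxb
    · -- use vertices (a,b), (a,c), (b,a), (b,c)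
      set t := (x - b) / (a - b) with htdef
      set s := (y - c) / (a + b - c - x) with hsdef
      have hD : (0:ℝ) ≤ a + b - c - x := by linarith
      have ht : t * (a - b) = x - b := by
        rcases eq_or_lt_of_le h12 with h | h
        · have hxb' : x = b := le_antisymm (by linarith) hxb
          rw [hxb', ← h]; ring
        · rw [htdef]; exact div_mul_cancel₀ _ (ne_of_gt (by linarith))
      have hs : s * (a + b - c - x) = y - c := by
        rcases eq_or_lt_of_le hD with h | h
        · have : y = c := by linarith
          rw [this, ← h]; ring
        · rw [hsdef]; exact div_mul_cancel₀ _ (ne_of_gt h)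
      have ht0 : 0 ≤ t := div_nonneg (by linarith) (by linarith)
      have ht1 : t ≤ 1 := by
        rcases eq_or_lt_of_le h12 with h | h
        · rw [htdef, ← h]; simp
        · rw [htdef, div_le_one (by linarith)]; linarith
      have hs0 : 0 ≤ s := div_nonneg (by linarith) hD
      have hs1' : s ≤ 1 := by
        rcases eq_or_lt_of_le hD with h | h
        · rw [hsdef, ← h]; simp
        · rw [hsdef, div_le_one h]; linarith
      clear_value t s
      have hxy : ((x, y) : ℝ × ℝ) =
          t • (s • ((a,b) : ℝ×ℝ) + (1-s) • ((a,c) : ℝ×ℝ))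
          + (1-t) • (s • ((b,a) : ℝ×ℝ) + (1-s) • ((b,c) : ℝ×ℝ)) := by
        simp only [Prod.smul_mk, smul_eq_mul, Prod.mk_add_mk, Prod.ext_iff]
        constructor
        · linear_combination -ht
        · linear_combination s * ht - hs
      rw [hxy]
      exact quad_mem memA1 memA2 memB1 memB2 ht0 ht1 hs0 hs1'
    · -- use vertices (b,a), (b,c), (c,a), (c,b)
      set t := (x - c) / (b - c) with htdef
      set s := (x + y - b - c) / (a + x - b - c) with hsdef
      have hE : (0:ℝ) ≤ a + x - b - c := by linarith
      have ht : t * (b - c) = x - c := by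
        rcases eq_or_lt_of_le h23 with h | h
        · have hxc : x = c := le_antisymm (by linarith) (by linarith)
          rw [hxc, ← h]; ring
        · rw [htdef]; exact div_mul_cancel₀ _ (ne_of_gt (by linarith))
      have hs : s * (a + x - b - c) = x + y - b - c := by
        rcases eq_or_lt_of_le hE with h | h
        · have : x + y - b - c = 0 := by linarith
          rw [this, ← h]; ring
        · rw [hsdef]; exact div_mul_cancel₀ _ (ne_of_gt h)
      have ht0 : 0 ≤ t := div_nonneg (by linarith) (by linarith)
      have ht1 : t ≤ 1 := by
        rcases eq_or_lt_of_le h23 with h | h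
        · rw [htdef, ← h]; simp
        · rw [htdef, div_le_one (by linarith)]; linarith
      have hs0 : 0 ≤ s := div_nonneg (by linarith) hE
      have hs1' : s ≤ 1 := by
        rcases eq_or_lt_of_le hE with h | h
        · rw [hsdef, ← h]; simp
        · rw [hsdef, div_le_one h]; linarith
      clear_value t s
      have hxy : ((x, y) : ℝ × ℝ) =
          t • (s • ((b,a) : ℝ×ℝ) + (1-s) • ((b,c) : ℝ×ℝ))
          + (1-t) • (s • ((c,a) : ℝ×ℝ) + (1-s) • ((c,b) : ℝ×ℝ)) := by
        simp only [Prod.smul_mk, smul_eq_mul, Prod.mk_add_mk, Prod.ext_iff]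
        constructor
        · linear_combination -ht
        · linear_combination (1 - s) * ht - hs
      rw [hxy]
      exact quad_mem memB1 memB2 memC1 memC2 ht0 ht1 hs0 hs1'

/-- for a 3-dimensional probability vector `p` sorted non-increasingly, the
relative (2-dimensional) volume of the future majorisation cone — the convex hull of the
6 permutations of `p`, here represented in the affine coordinates `(q₁, q₂)` — w.r.t.
the simplex `Δ_3` equals `(3p₁ − 1)² − 3(p₂ − p₁)²`. -/
theorem future_cone_volume_dim_three (p : Fin 3 → ℝ) (hp : IsProbVec p)
    (h12 : p 1 ≤ p 0) (h23 : p 2 ≤ p 1) :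
    (volume (convexHull ℝ
        (Set.range fun σ : Equiv.Perm (Fin 3) => ((p (σ 0), p (σ 1)) : ℝ × ℝ)))).toReal /
      (volume {x : ℝ × ℝ | 0 ≤ x.1 ∧ 0 ≤ x.2 ∧ x.1 + x.2 ≤ 1}).toReal =
      (3 * p 0 - 1) ^ 2 - 3 * (p 1 - p 0) ^ 2 := by
  have hsum : p 0 + p 1 + p 2 = 1 := by
    have := hp.2; rwa [Fin.sum_univ_three] at this
  have hden : ({x : ℝ × ℝ | 0 ≤ x.1 ∧ 0 ≤ x.2 ∧ x.1 + x.2 ≤ 1}) = Tri := rfl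
  rw [hull_eq_Hex p hp h12 h23, hden, vol_Tri,
    vol_Hex (p 0) (p 1) (p 2) h12 h23 hsum, ENNReal.toReal_ofReal (by norm_num)]
  set a := p 0
  set b := p 1
  set c := p 2
  rw [div_eq_iff (by norm_num : (1/2 : ℝ) ≠ 0)]
  linear_combination (1/2) * (-5*a + b + c + 1) * hsum
end

section
/- Probabilistic past cone via an auxiliary distribution: for 0 < P ≤ 1 and p ∈ Δ_d sorted non-increasingly, define p̃ by p̃_1 = P·p_1 + (1−P) and p̃_i = P·p_i for i ≥ 2. Then p̃ is a probability vector sorted non-increasingly, and for any q ∈ Δ_d, the condition P ≤ (1 − Q_k)/(1 − P_k) for all k ∈ {1,…,d−1} (where P_k, Q_k are the cumulative sums of sorted p, q) holds if and only if p̃ majorises q. -/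
open Finset

/-- Partial sum of the first `k` entries of `p`. -/
noncomputable def psum {d : ℕ} (p : Fin d → ℝ) (k : ℕ) : ℝ :=
  ∑ i ∈ Finset.univ.filter (fun i : Fin d => (i : ℕ) < k), p i

/-- The vector `p` rearranged in non-increasing order. -/
noncomputable def sortDesc {d : ℕ} (p : Fin d → ℝ) : Fin d → ℝ :=
  fun i => p (Tuple.sort p i.rev)

/-- The auxiliary distribution `p̃` for the probabilistic past cone:
`p̃₁ = P·p₁ + (1−P)` and `p̃ᵢ = P·pᵢ` for `i ≥ 2`. -/
noncomputable def pTilde {d : ℕ} (P : ℝ) (p : Fin d → ℝ) : Fin d → ℝ :=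
  fun i => if (i : ℕ) = 0 then P * p i + (1 - P) else P * p i

section

variable {d : ℕ}

lemma psum_zero (p : Fin d → ℝ) : psum p 0 = 0 := by
  simp [psum]

lemma psum_of_le (p : Fin d → ℝ) {k : ℕ} (hk : d ≤ k) : psum p k = ∑ i, p i := by
  rw [psum, filter_true_of_mem fun i _ => i.isLt.trans_le hk]

lemma sum_sortDesc (q : Fin d → ℝ) : ∑ i, sortDesc q i = ∑ i, q i :=
  Equiv.sum_comp (Fin.revPerm.trans (Tuple.sort q)) q

lemma IsProbVec.pos_dim {p : Fin d → ℝ} (hp : IsProbVec p) : 0 < d := by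
  rcases d with _ | d
  · simpa using hp.2
  · exact d.succ_pos

lemma psum_pTilde (hd : 0 < d) (P : ℝ) (p : Fin d → ℝ) {k : ℕ} (hk : 0 < k) :
    psum (pTilde P p) k = P * psum p k + (1 - P) := by
  have hsplit : ∀ i : Fin d, pTilde P p i = P * p i + if ⟨0, hd⟩ = i then 1 - P else 0 := by
    intro i
    simp only [pTilde, Fin.ext_iff, eq_comm (a := 0)]
    split_ifs <;> ring
  simp only [psum, hsplit, sum_add_distrib, ← mul_sum, sum_ite_eq, mem_filter, mem_univ,
    true_and, if_pos hk]

variable {P : ℝ} {p : Fin d → ℝ}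

lemma IsProbVec.pTilde (hP0 : 0 ≤ P) (hP1 : P ≤ 1) (hp : IsProbVec p) :
    IsProbVec (pTilde P p) := by
  refine ⟨fun i => ?_, ?_⟩
  · have := mul_nonneg hP0 (hp.1 i)
    unfold _root_.pTilde
    split_ifs <;> linarith
  · rw [← psum_of_le _ le_rfl, psum_pTilde hp.pos_dim P p hp.pos_dim, psum_of_le _ le_rfl, hp.2]
    ring

lemma Antitone.pTilde (hP0 : 0 ≤ P) (hP1 : P ≤ 1) (hanti : Antitone p) :
    Antitone (pTilde P p) := by
  intro i j hij
  have := mul_le_mul_of_nonneg_left (hanti hij) hP0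
  unfold _root_.pTilde
  split_ifs with hj hi hi
  · linarith
  · exact absurd (Fin.le_iff_val_le_val.mp hij) (by omega)
  · linarith
  · exact this

/-- At `k = 0` and `k = d` both partial sums are forced, `0` and `1`; in between, the identity
`P̃_k = P P_k + (1 - P)` turns `Q_k ≤ P̃_k` into `P (1 - P_k) ≤ 1 - Q_k`. -/
lemma forall_psum_le_psum_pTilde_iff (hp : IsProbVec p) {r : Fin d → ℝ} (hr : ∑ i, r i = 1) :
    (∀ k ≤ d, psum r k ≤ psum (pTilde P p) k) ↔
      ∀ k, 1 ≤ k → k ≤ d - 1 → P * (1 - psum p k) ≤ 1 - psum r k := by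
  have hd := hp.pos_dim
  constructor
  · intro h k hk1 hkd
    have := h k (by omega)
    rw [psum_pTilde hd P p hk1] at this
    linarith
  · intro h k hkd
    rcases Nat.eq_zero_or_pos k with rfl | hk1
    · simp [psum_zero]
    rw [psum_pTilde hd P p hk1]
    rcases hkd.eq_or_lt with rfl | hklt
    · rw [psum_of_le _ le_rfl, psum_of_le _ le_rfl, hr, hp.2]
      linarith
    · linarith [h k hk1 (by omega)]

end

theorem probabilistic_past_aux_general {d : ℕ} (P : ℝ) (hP0 : 0 < P) (hP1 : P ≤ 1)
    (p : Fin d → ℝ) (hp : IsProbVec p) (hsort : ∀ i j : Fin d, i ≤ j → p j ≤ p i) :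
    IsProbVec (pTilde P p) ∧
      (∀ i j : Fin d, i ≤ j → pTilde P p j ≤ pTilde P p i) ∧
      (∀ q : Fin d → ℝ, IsProbVec q →
        ((∀ k, 1 ≤ k → k ≤ d - 1 → P * (1 - psum p k) ≤ 1 - psum (sortDesc q) k) ↔
          ∀ k ≤ d, psum (sortDesc q) k ≤ psum (pTilde P p) k)) :=
  ⟨hp.pTilde hP0.le hP1, Antitone.pTilde hP0.le hP1 hsort,
    fun q hq => (forall_psum_le_psum_pTilde_iff hp ((sum_sortDesc q).trans hq.2)).symm⟩

/-- for `0 < P ≤ 1` and `p` sorted non-increasingly, `p̃` is a probability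
vector sorted non-increasingly, and for any `q ∈ Δ_d`, the condition
`P(1 − P_k) ≤ 1 − Q_k` for all `k ∈ {1,…,d−1}` holds iff `p̃` majorises `q`. -/
theorem probabilistic_past_aux {d : ℕ} (hd : 1 ≤ d) (P : ℝ) (hP0 : 0 < P) (hP1 : P ≤ 1)
    (p : Fin d → ℝ) (hp : IsProbVec p) (hsort : ∀ i j : Fin d, i ≤ j → p j ≤ p i) :
    IsProbVec (pTilde P p) ∧
      (∀ i j : Fin d, i ≤ j → pTilde P p j ≤ pTilde P p i) ∧
      (∀ q : Fin d → ℝ, IsProbVec q →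
        ((∀ k, 1 ≤ k → k ≤ d - 1 → P * (1 - psum p k) ≤ 1 - psum (sortDesc q) k) ↔
          ∀ k ≤ d, psum (sortDesc q) k ≤ psum (pTilde P p) k)) :=
  probabilistic_past_aux_general P hP0 hP1 p hp hsort
end

section
/- Passive state is minimal among its permutations under thermomajorisation at β=0 (majorisation): for any p ∈ Δ_d and any permutation σ, the permuted vector σ·p majorises p and is majorised by p (they are equal as multisets), hence T_+(σ·p) = T_+(p); however for β > 0 and Gibbs state γ with strictly decreasing entries, the maximally active arrangement p_max (entries of p sorted in increasing order against decreasing γ, i.e., anti-ordered) thermomajorises every other permutation of p: for all σ ∈ S_d, p_max ≻_β σ·p. -/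
open Finset

/-- The vector `p` rearranged in non-decreasing order (maximally active arrangement:
largest population on the level with smallest Gibbs weight). -/
noncomputable def sortAsc {d : ℕ} (p : Fin d → ℝ) : Fin d → ℝ :=
  fun i => p (Tuple.sort p i)

/-- Thermomajorisation relative to the Gibbs distribution `γ`, via the standard
equivalent characterisation: `p ≻_β q` iff `‖q − tγ‖₁ ≤ ‖p − tγ‖₁` for all `t ∈ ℝ`
(equivalently, the thermomajorisation curve of `p` lies on or above that of `q`). -/
def ThermoMajorizes {d : ℕ} (γ p q : Fin d → ℝ) : Prop :=
  ∀ t : ℝ, ∑ i, |q i - t * γ i| ≤ ∑ i, |p i - t * γ i|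

/-!
For `t ≥ 0` the sum `∑ i, |q i - t * γ i|` evaluates the supermodular function
`(x, y) ↦ |x + y|` at the pairs `(q i, -t * γ i)`. Since `-t * γ` is increasing, the
rearrangement inequality for supermodular functions makes this sum largest when `q` is increasing
(`sortAsc p`) and smallest when `q` is decreasing (`sortDesc p`). For `t < 0` every summand is
nonnegative, so the sum is `∑ i, q i - t * ∑ i, γ i`, the same for every arrangement of `p`.
-/

open Equiv Equiv.Perm Finset

def Supermodular {α β M : Type*} [Preorder α] [Preorder β] [Add M] [Preorder M]
    (C : α → β → M) : Prop :=
  ∀ ⦃x₁ x₂ : α⦄ ⦃y₁ y₂ : β⦄, x₁ ≤ x₂ → y₁ ≤ y₂ → C x₂ y₁ + C x₁ y₂ ≤ C x₁ y₁ + C x₂ y₂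

namespace Supermodular

variable {ι α β M : Type*} [Fintype ι] [Preorder α] [Preorder β]
  [AddCommMonoid M] [PartialOrder M] [IsOrderedAddMonoid M]
  {C : α → β → M} {f : ι → α} {g : ι → β}

theorem sum_comp_perm_le_sum_comp_swap_mul [DecidableEq ι] (hC : Supermodular C)
    {σ : Perm ι} {x : ι} (hx : σ x ≠ x) (hf : f x ≤ f (σ x)) (hg : g x ≤ g (σ.symm x)) :
    ∑ i, C (f (σ i)) (g i) ≤ ∑ i, C (f ((swap x (σ x) * σ) i)) (g i) := by
  set k := σ.symm x
  have hσk : σ k = x := σ.apply_symm_apply x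
  have hxk : x ≠ k := fun h => hx ((congrArg σ h).trans hσk)
  rw [← sum_add_sum_compl {x, k}, ← sum_add_sum_compl {x, k} (fun i => C (f _) (g i))]
  refine add_le_add ?_ (sum_congr rfl fun i hi => ?_).le
  · simpa [sum_pair hxk, hσk] using hC hf hg
  · simp only [mem_compl, mem_insert, mem_singleton, not_or] at hi
    have hσi : σ i ≠ x := fun h => hi.2 (σ.injective (h.trans hσk.symm))
    rw [mul_apply, swap_apply_of_ne_of_ne hσi (fun h => hi.1 (σ.injective h))]

theorem sum_comp_perm_le_sum [LinearOrder ι] (hC : Supermodular C) (hf : Monotone f)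
    (hg : Monotone g) (σ : Perm ι) :
    ∑ i, C (f (σ i)) (g i) ≤ ∑ i, C (f i) (g i) := by
  induction hn : σ.support.card using Nat.strong_induction_on generalizing σ with
  | _ n ih =>
  rcases σ.support.eq_empty_or_nonempty with hempty | hne
  · simp [support_eq_empty_iff.1 hempty]
  set x := σ.support.min' hne
  have hx : σ x ≠ x := mem_support.1 (min'_mem _ _)
  have hmin : ∀ y, σ y ≠ y → x ≤ y := fun y hy => min'_le _ _ (mem_support.2 hy)
  -- The least point moved by `σ` lies below both its image and its preimage, so the swap that
  -- fixes it does not decrease the sum.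
  have hxσ : x ≤ σ x := hmin _ fun h => hx (σ.injective h)
  have hxσinv : x ≤ σ.symm x := hmin _ (by simpa [σ.eq_symm_apply] using hx)
  calc ∑ i, C (f (σ i)) (g i)
      ≤ ∑ i, C (f ((swap x (σ x) * σ) i)) (g i) :=
        hC.sum_comp_perm_le_sum_comp_swap_mul hx (hf hxσ) (hg hxσinv)
    _ ≤ ∑ i, C (f i) (g i) := ih _ (hn ▸ card_support_swap_mul hx) _ rfl

theorem sum_comp_perm_le_sum_comp_perm_of_monotone [LinearOrder ι] (hC : Supermodular C)
    {σ : Perm ι} (hf : Monotone (f ∘ σ)) (hg : Monotone g) (τ : Perm ι) :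
    ∑ i, C (f (τ i)) (g i) ≤ ∑ i, C (f (σ i)) (g i) := by
  simpa using hC.sum_comp_perm_le_sum hf hg (σ.symm * τ)

theorem sum_comp_perm_le_sum_comp_perm_of_antitone [LinearOrder ι] (hC : Supermodular C)
    {σ : Perm ι} (hf : Antitone (f ∘ σ)) (hg : Monotone g) (τ : Perm ι) :
    ∑ i, C (f (σ i)) (g i) ≤ ∑ i, C (f (τ i)) (g i) := by
  have hCdual : Supermodular fun (x : αᵒᵈ) y => OrderDual.toDual (C (OrderDual.ofDual x) y) :=
    fun _ _ _ _ hx hy => hC hx hy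
  exact hCdual.sum_comp_perm_le_sum_comp_perm_of_monotone hf.dual_right hg τ

end Supermodular

theorem supermodular_abs_add : Supermodular fun x y : ℝ => |x + y| := by
  intro x₁ x₂ y₁ y₂ hx hy
  dsimp only
  rcases abs_cases (x₂ + y₁) with ⟨h₁, -⟩ | ⟨h₁, -⟩ <;>
  rcases abs_cases (x₁ + y₂) with ⟨h₂, -⟩ | ⟨h₂, -⟩ <;>
  linarith [le_abs_self (x₁ + y₁), neg_abs_le (x₁ + y₁), le_abs_self (x₂ + y₂),
    neg_abs_le (x₂ + y₂)]

section Thermomajorization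

variable {ι : Type*} [Fintype ι] {γ p : ι → ℝ}

theorem sum_abs_sub_mul_of_nonpos (hγ : ∀ i, 0 ≤ γ i) (hp : ∀ i, 0 ≤ p i) {t : ℝ}
    (ht : t ≤ 0) : ∑ i, |p i - t * γ i| = ∑ i, p i - t * ∑ i, γ i := by
  rw [mul_sum, ← sum_sub_distrib]
  exact sum_congr rfl fun i _ =>
    abs_of_nonneg (sub_nonneg.2 ((mul_nonpos_of_nonpos_of_nonneg ht (hγ i)).trans (hp i)))

variable [LinearOrder ι] {t : ℝ} {σ : Perm ι}

theorem sum_abs_comp_perm_sub_mul_le_of_monotone (hγ : Antitone γ) (ht : 0 ≤ t)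
    (hσ : Monotone (p ∘ σ)) (τ : Perm ι) :
    ∑ i, |p (τ i) - t * γ i| ≤ ∑ i, |p (σ i) - t * γ i| := by
  simp only [sub_eq_add_neg]
  exact supermodular_abs_add.sum_comp_perm_le_sum_comp_perm_of_monotone hσ
    (hγ.const_mul ht).neg τ

theorem sum_abs_comp_perm_sub_mul_le_of_antitone (hγ : Antitone γ) (ht : 0 ≤ t)
    (hσ : Antitone (p ∘ σ)) (τ : Perm ι) :
    ∑ i, |p (σ i) - t * γ i| ≤ ∑ i, |p (τ i) - t * γ i| := by
  simp only [sub_eq_add_neg]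
  exact supermodular_abs_add.sum_comp_perm_le_sum_comp_perm_of_antitone hσ
    (hγ.const_mul ht).neg τ

end Thermomajorization

theorem thermoMajorizes_comp_perm_iff {d : ℕ} {γ p : Fin d → ℝ} (hγ : ∀ i, 0 ≤ γ i)
    (hp : ∀ i, 0 ≤ p i) {σ τ : Perm (Fin d)} :
    ThermoMajorizes γ (p ∘ σ) (p ∘ τ) ↔
      ∀ t, 0 ≤ t → ∑ i, |p (τ i) - t * γ i| ≤ ∑ i, |p (σ i) - t * γ i| := by
  refine ⟨fun h t _ => h t, fun h t => ?_⟩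
  rcases le_or_gt 0 t with ht | ht
  · exact h t ht
  · simp only [Function.comp_apply, sum_abs_sub_mul_of_nonpos hγ (fun i => hp _) ht.le,
      Equiv.sum_comp, le_refl]

theorem active_passive_extremal_general {d : ℕ} (γ p : Fin d → ℝ)
    (hγpos : ∀ i, 0 < γ i) (hγdec : ∀ i j : Fin d, i < j → γ j < γ i)
    (hp : IsProbVec p) :
    ∀ σ : Equiv.Perm (Fin d),
      ThermoMajorizes γ (sortAsc p) (p ∘ σ) ∧ ThermoMajorizes γ (p ∘ σ) (sortDesc p) := by
  intro σ
  have hγ : ∀ i, 0 ≤ γ i := fun i => (hγpos i).le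
  have hγanti : Antitone γ := StrictAnti.antitone fun i j => hγdec i j
  have hasc : Monotone (p ∘ Tuple.sort p) := Tuple.monotone_sort p
  have hdesc : Antitone (p ∘ ⇑(Tuple.sort p * Fin.revPerm : Perm (Fin d))) :=
    hasc.comp_antitone Fin.rev_anti
  exact ⟨(thermoMajorizes_comp_perm_iff hγ hp.1).2 fun t ht =>
      sum_abs_comp_perm_sub_mul_le_of_monotone hγanti ht hasc σ,
    (thermoMajorizes_comp_perm_iff hγ hp.1).2 fun t ht =>
      sum_abs_comp_perm_sub_mul_le_of_antitone hγanti ht hdesc σ⟩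

/-- for a Gibbs state `γ` with strictly decreasing positive entries, the
maximally active arrangement of `p` thermomajorises every permutation of `p`, and every
permutation of `p` thermomajorises the passive arrangement. -/
theorem active_passive_extremal {d : ℕ} (γ p : Fin d → ℝ)
    (hγpos : ∀ i, 0 < γ i) (hγdec : ∀ i j : Fin d, i < j → γ j < γ i)
    (hγsum : ∑ i, γ i = 1) (hp : IsProbVec p) :
    ∀ σ : Equiv.Perm (Fin d),
      ThermoMajorizes γ (sortAsc p) (p ∘ σ) ∧ ThermoMajorizes γ (p ∘ σ) (sortDesc p) :=
  active_passive_extremal_general γ p hγpos hγdec hp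
end
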